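/- Let Σ be the signed complete graph on n ≥ 3 vertices with exactly one negative edge. Then bdim(Σ) = 3. -/

import Mathlib

open Finset

/-- The sign of a real number, as an integer. -/
noncomputable def sgnZ (x : ℝ) : ℤ := if 0 < x then 1 else if x < 0 then -1 else 0

/-- The standard inner product on `ℝ^k`. -/
def dotp {k : ℕ} (a b : Fin k → ℝ) : ℝ := ∑ i, a i * b i

/-- Membership in `Ω^k` where `Ω = {-1,0,1}`. -/
def InOmega {k : ℕ} (a : Fin k → ℝ) : Prop := ∀ i, a i = -1 ∨ a i = 0 ∨ a i = 1

/-- `σ` is a sign function for the graph `G`: symmetric and `±1`-valued on edges,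
so that `(G, σ)` is a signed graph. -/
def IsSignFn {V : Type*} (G : SimpleGraph V) (σ : V → V → ℤ) : Prop :=
  (∀ u v, σ u v = σ v u) ∧ ∀ u v, G.Adj u v → σ u v = 1 ∨ σ u v = -1

/-- `ζ : V → Ω^k` is a vector valued (`k`-)switching function for the signed graph:
`⟨ζ u, ζ v⟩ ≠ 0` for every edge `uv`. -/
def IsSwitching {V : Type*} (G : SimpleGraph V) {k : ℕ} (ζ : V → Fin k → ℝ) : Prop :=
  (∀ v, InOmega (ζ v)) ∧ ∀ u v, G.Adj u v → dotp (ζ u) (ζ v) ≠ 0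

/-- The sign function of the switched signed graph `Σ^ζ`:
`σ^ζ(uv) = σ(uv) · sgn ⟨ζ u, ζ v⟩`. -/
noncomputable def switchSign {V : Type*} (σ : V → V → ℤ) {k : ℕ} (ζ : V → Fin k → ℝ) : V → V → ℤ :=
  fun u v => σ u v * sgnZ (dotp (ζ u) (ζ v))

/-- `ζ : V → Ω^k` is a positive `k`-switching function (a `k`-positive function):
it switches `Σ` to the all positive signed graph. -/
def IsPositive {V : Type*} (G : SimpleGraph V) (σ : V → V → ℤ) {k : ℕ}
    (ζ : V → Fin k → ℝ) : Prop :=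
  (∀ v, InOmega (ζ v)) ∧ ∀ u v, G.Adj u v → switchSign σ ζ u v = 1

/-- The balancing dimension: the least `k ≥ 1` admitting a `k`-positive function. -/
noncomputable def bdim {V : Type*} (G : SimpleGraph V) (σ : V → V → ℤ) : ℕ :=
  sInf {k | 1 ≤ k ∧ ∃ ζ : V → Fin k → ℝ, IsPositive G σ ζ}

/-- The strong balancing dimension: the least `k ≥ 1` admitting an injective
`k`-positive function. -/
noncomputable def sbdim {V : Type*} (G : SimpleGraph V) (σ : V → V → ℤ) : ℕ :=
  sInf {k | 1 ≤ k ∧ ∃ ζ : V → Fin k → ℝ, Function.Injective ζ ∧ IsPositive G σ ζ}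

lemma sgnZ_eq_one_iff {x : ℝ} : sgnZ x = 1 ↔ 0 < x := by
  unfold sgnZ; split_ifs <;> grind

lemma sgnZ_eq_neg_one_iff {x : ℝ} : sgnZ x = -1 ↔ x < 0 := by
  unfold sgnZ; split_ifs <;> grind

/-- In dimension one, `⟨a,b⟩⟨a,c⟩⟨b,c⟩ = (a b c)²` cannot be negative; in dimension two
the finitely many vectors of `Ω²` are checked directly. -/
lemma three_le_of_dotp_neg_pos_pos {k : ℕ} {a b c : Fin k → ℝ}
    (ha : InOmega a) (hb : InOmega b) (hc : InOmega c)
    (hab : dotp a b < 0) (hac : 0 < dotp a c) (hbc : 0 < dotp b c) : 3 ≤ k := by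
  by_contra! hk
  interval_cases k
  · simp [dotp] at hab
  · simp only [dotp, Fin.sum_univ_one] at hab hac hbc
    nlinarith [mul_neg_of_neg_of_pos hab (mul_pos hac hbc), sq_nonneg (a 0 * b 0 * c 0)]
  · simp only [dotp, Fin.sum_univ_two] at hab hac hbc
    rcases ha 0 with h|h|h <;> rcases ha 1 with h|h|h <;>
      rcases hb 0 with h|h|h <;> rcases hb 1 with h|h|h <;>
      rcases hc 0 with h|h|h <;> rcases hc 1 with h|h|h <;>
      simp only [*] at hab hac hbc <;> linarith

section Positive

variable {V : Type*} {G : SimpleGraph V} {σ : V → V → ℤ} {k : ℕ} {ζ : V → Fin k → ℝ}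

lemma IsPositive.dotp_pos (h : IsPositive G σ ζ) {u v : V} (huv : G.Adj u v)
    (hσ : σ u v = 1) : 0 < dotp (ζ u) (ζ v) := by
  have := h.2 u v huv
  rw [switchSign, hσ, one_mul] at this
  exact sgnZ_eq_one_iff.1 this

lemma IsPositive.dotp_neg (h : IsPositive G σ ζ) {u v : V} (huv : G.Adj u v)
    (hσ : σ u v = -1) : dotp (ζ u) (ζ v) < 0 := by
  have := h.2 u v huv
  rw [switchSign, hσ, neg_one_mul, neg_eq_iff_eq_neg] at this
  exact sgnZ_eq_neg_one_iff.1 this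

lemma bdim_le (hk : 1 ≤ k) (h : IsPositive G σ ζ) : bdim G σ ≤ k :=
  Nat.sInf_le ⟨hk, ζ, h⟩

lemma le_bdim {m : ℕ} (hk : 1 ≤ k) (hζ : IsPositive G σ ζ)
    (h : ∀ (l : ℕ) (ξ : V → Fin l → ℝ), IsPositive G σ ξ → m ≤ l) : m ≤ bdim G σ := by
  obtain ⟨-, ξ, hξ⟩ := Nat.sInf_mem (s := {l | 1 ≤ l ∧ ∃ ξ : V → Fin l → ℝ, IsPositive G σ ξ})
    ⟨k, hk, ζ, hζ⟩
  exact h _ ξ hξ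

lemma IsPositive.three_le_of_neg_triangle (h : IsPositive G σ ζ) {x y z : V}
    (hxy : G.Adj x y) (hxz : G.Adj x z) (hyz : G.Adj y z)
    (σxy : σ x y = -1) (σxz : σ x z = 1) (σyz : σ y z = 1) : 3 ≤ k :=
  three_le_of_dotp_neg_pos_pos (h.1 x) (h.1 y) (h.1 z)
    (h.dotp_neg hxy σxy) (h.dotp_pos hxz σxz) (h.dotp_pos hyz σyz)

end Positive

section OneNegEdge

variable {V : Type*} [DecidableEq V]

def oneNegEdgeSign (x y : V) (u v : V) : ℤ :=
  if (u = x ∧ v = y) ∨ (u = y ∧ v = x) then -1 else 1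

def oneNegEdgeSwitching (x y : V) (v : V) : Fin 3 → ℝ :=
  if v = x then ![-1, 1, 1] else if v = y then ![1, 1, -1] else ![1, 1, 1]

lemma isPositive_oneNegEdgeSwitching {x y : V} (hxy : x ≠ y) :
    IsPositive ⊤ (oneNegEdgeSign x y) (oneNegEdgeSwitching x y) := by
  refine ⟨fun v i => ?_, fun u v huv => ?_⟩
  · unfold oneNegEdgeSwitching
    split_ifs <;> fin_cases i <;> simp
  · rw [SimpleGraph.top_adj] at huv
    unfold switchSign oneNegEdgeSign oneNegEdgeSwitching dotp
    by_cases hux : u = x <;> by_cases huy : u = y <;> by_cases hvx : v = x <;>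
      by_cases hvy : v = y <;>
      simp_all [Fin.sum_univ_three, sgnZ, one_add_one_eq_two, two_add_one_eq_three]

theorem bdim_top_oneNegEdgeSign {x y z : V} (hxy : x ≠ y) (hzx : z ≠ x) (hzy : z ≠ y) :
    bdim ⊤ (oneNegEdgeSign x y) = 3 := by
  have hpos := isPositive_oneNegEdgeSwitching hxy
  refine le_antisymm (bdim_le (by norm_num) hpos) (le_bdim (by norm_num) hpos ?_)
  intro l ξ hξ
  refine hξ.three_le_of_neg_triangle hxy hzx.symm hzy.symm ?_ ?_ ?_ <;>
    simp [oneNegEdgeSign, hxy, hzx, hzy]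

end OneNegEdge

/-- The signed complete graph on `n ≥ 3` vertices with exactly one negative edge has
balancing dimension `3`. -/
theorem bdim_complete_one_neg_edge {n : ℕ} (hn : 3 ≤ n) :
    bdim (⊤ : SimpleGraph (Fin n))
      (fun u v => if (u.val = 0 ∧ v.val = 1) ∨ (u.val = 1 ∧ v.val = 0)
        then (-1 : ℤ) else 1) = 3 := by
  have hσ : (fun u v : Fin n => if (u.val = 0 ∧ v.val = 1) ∨ (u.val = 1 ∧ v.val = 0)
      then (-1 : ℤ) else 1) = oneNegEdgeSign ⟨0, by omega⟩ ⟨1, by omega⟩ := by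
    ext u v
    simp [oneNegEdgeSign, Fin.ext_iff]
  rw [hσ]
  exact bdim_top_oneNegEdgeSign (z := ⟨2, by omega⟩) (by simp [Fin.ext_iff])
    (by simp [Fin.ext_iff]) (by simp [Fin.ext_iff])
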